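/- Let G be a finite group, N a nonabelian minimal normal subgroup, and suppose some nontrivial χ ∈ Irr(N) extends to a character ψ ∈ Irr(G) with ker(ψ) = 1. If cod(G) = cod(G/N), then we reach a contradiction: cod(ψ) = |G/N|·|N|/χ(1) does not divide |G/N|, yet every element of cod(G/N) divides |G/N|. -/

import Mathlib

/-- The codegree of (the character of) a representation `V` of `G`:
`|G : ker χ| / χ(1)` as a rational number. -/
noncomputable def codegree {G : Type} [Group G] (V : FDRep ℂ G) : ℚ :=
  (Nat.card G : ℚ) / ((Nat.card V.ρ.ker : ℚ) * (Module.finrank ℂ V : ℚ))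

/-- The codegree set of `G`: codegrees of all irreducible complex characters. -/
noncomputable def codSet (G : Type) [Group G] : Set ℚ :=
  {c | ∃ V : FDRep ℂ G, CategoryTheory.Simple V ∧ codegree V = c}

/-!
The codegree of the faithful `ψ` is `|G| / ψ(1) = |G/N| · |N| / χ(1)`, whereas every codegree of
`G/N` is at most `|G/N|`; so `cod(G) = cod(G/N)` forces `|N| ≤ χ(1)`. But a nontrivial irreducible
representation `V` of a finite group `H` has dimension `< |H|`: for `v ≠ 0` the `|H|` vectors `h • v`
span `V`, and they are linearly dependent because their sum is an invariant vector, hence zero.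
-/

open CategoryTheory Module

universe u

namespace Representation

variable {k G V : Type*} [CommRing k] [AddCommGroup V] [Module k V]

def orbitSpan [Monoid G] (ρ : Representation k G V) (v : V) : Subrepresentation ρ where
  toSubmodule := Submodule.span k (Set.range fun g ↦ ρ g v)
  apply_mem_toSubmodule g w hw := by
    induction hw using Submodule.span_induction with
    | mem _ hx =>
      obtain ⟨h, rfl⟩ := hx
      exact Submodule.subset_span ⟨g * h, by simp⟩
    | zero => simp
    | add _ _ _ _ hx hy => rw [map_add]; exact add_mem hx hy
    | smul c _ _ hx => rw [map_smul]; exact Submodule.smul_mem _ c hx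

noncomputable def invariantsSubrepresentation [Group G] (ρ : Representation k G V) : Subrepresentation ρ where
  toSubmodule := invariants ρ
  apply_mem_toSubmodule g _ hv h := by rw [hv g, hv h]

end Representation

namespace FDRep

open Representation

variable {k H : Type u} [Field k]

section Monoid

variable [Monoid H] (V : FDRep k H)

noncomputable def subrepresentationι (σ : Subrepresentation V.ρ) :
    FDRep.of σ.toRepresentation ⟶ V where
  hom := FGModuleCat.ofHom σ.toSubmodule.subtype
  comm _ := rfl

lemma subrepresentationι_injective (σ : Subrepresentation V.ρ) :
    Function.Injective (subrepresentationι V σ) :=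
  fun _ _ h ↦ Subtype.ext h

lemma subrepresentation_eq_bot_or_eq_top [Simple V] (σ : Subrepresentation V.ρ) :
    σ = ⊥ ∨ σ = ⊤ := by
  refine or_iff_not_imp_left.mpr fun hσ ↦ ?_
  have : Mono (subrepresentationι V σ) :=
    ConcreteCategory.mono_of_injective _ (subrepresentationι_injective V σ)
  have hne : subrepresentationι V σ ≠ 0 := by
    intro h0
    obtain ⟨v, hv, hv0⟩ := Submodule.exists_mem_ne_zero_of_ne_bot
      (fun h ↦ hσ (Subrepresentation.toSubmodule_injective h))
    exact hv0 congr((ConcreteCategory.hom $h0) ⟨v, hv⟩)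
  have := isIso_of_mono_of_nonzero hne
  refine Subrepresentation.toSubmodule_injective (Submodule.eq_top_iff'.mpr fun v ↦ ?_)
  obtain ⟨w, rfl⟩ := (ConcreteCategory.bijective_of_isIso (subrepresentationι V σ)).2 v
  exact w.2

lemma nontrivial_of_simple [Simple V] : Nontrivial V := by
  by_contra h
  have : Subsingleton V := not_nontrivial_iff_subsingleton.mp h
  exact id_nonzero V (by ext; exact Subsingleton.elim _ _)

lemma span_orbit_eq_top_of_simple [Simple V] {v : V} (hv : v ≠ 0) :
    Submodule.span k (Set.range fun h ↦ V.ρ h v) = ⊤ := by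
  refine congrArg Subrepresentation.toSubmodule
    ((subrepresentation_eq_bot_or_eq_top V (orbitSpan V.ρ v)).resolve_left fun hbot ↦ hv ?_)
  have hv_mem : v ∈ (orbitSpan V.ρ v).toSubmodule := Submodule.subset_span ⟨1, by simp⟩
  rw [hbot] at hv_mem
  exact (Submodule.mem_bot k).mp hv_mem

end Monoid

section Group

variable [Group H] (V : FDRep k H)

lemma invariants_eq_bot_of_simple [Simple V] (hV : V.ρ.ker ≠ ⊤) : invariants V.ρ = ⊥ := by
  refine congrArg Subrepresentation.toSubmodule
    ((subrepresentation_eq_bot_or_eq_top V (invariantsSubrepresentation V.ρ)).resolve_right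
      fun htop ↦ hV ?_)
  refine (Subgroup.eq_top_iff' _).mpr fun g ↦ LinearMap.ext fun v ↦ ?_
  have hv : v ∈ (invariantsSubrepresentation V.ρ).toSubmodule := by rw [htop]; trivial
  exact hv g

lemma sum_orbit_eq_zero_of_simple [Fintype H] [Simple V] (hV : V.ρ.ker ≠ ⊤) (v : V) :
    ∑ h, V.ρ h v = 0 := by
  have hmem : ∑ h, V.ρ h v ∈ invariants V.ρ := fun g ↦ by
    rw [map_sum]
    exact Fintype.sum_equiv (Equiv.mulLeft g) _ _ fun h ↦ by simp
  rwa [invariants_eq_bot_of_simple V hV, Submodule.mem_bot] at hmem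

lemma finrank_lt_card_of_simple [Finite H] [Simple V] (hV : V.ρ.ker ≠ ⊤) :
    finrank k V < Nat.card H := by
  have := Fintype.ofFinite H
  have := nontrivial_of_simple V
  obtain ⟨v, hv⟩ := exists_ne (0 : V)
  have hdep : ¬LinearIndependent k fun h ↦ V.ρ h v :=
    Fintype.not_linearIndependent_iff.mpr
      ⟨fun _ ↦ 1, by simpa using sum_orbit_eq_zero_of_simple V hV v, 1, one_ne_zero⟩
  have hrank : (Set.range fun h ↦ V.ρ h v).finrank k = finrank k V := by
    rw [Set.finrank, span_orbit_eq_top_of_simple V hv, finrank_top]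
  rw [linearIndependent_iff_card_eq_finrank_span, hrank] at hdep
  have hle := finrank_range_le_card (R := k) fun h ↦ V.ρ h v
  rw [hrank] at hle
  rw [Nat.card_eq_fintype_card]
  exact lt_of_le_of_ne hle (Ne.symm hdep)

end Group

end FDRep

lemma codegree_le_natCard {G : Type} [Group G] (V : FDRep ℂ G) : codegree V ≤ Nat.card G := by
  unfold codegree
  rw [← Nat.cast_mul]
  rcases Nat.eq_zero_or_pos (Nat.card V.ρ.ker * finrank ℂ V) with h | h
  · rw [h, Nat.cast_zero, div_zero]
    exact Nat.cast_nonneg _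
  · exact div_le_self (Nat.cast_nonneg _) (Nat.one_le_cast.mpr h)

lemma le_natCard_of_mem_codSet {G : Type} [Group G] {c : ℚ} (hc : c ∈ codSet G) :
    c ≤ Nat.card G := by
  obtain ⟨V, -, rfl⟩ := hc
  exact codegree_le_natCard V

lemma codegree_of_ker_eq_bot {G : Type} [Group G] {V : FDRep ℂ G} (hV : V.ρ.ker = ⊥) :
    codegree V = Nat.card G / finrank ℂ V := by
  rw [codegree, hV, Subgroup.card_bot, Nat.cast_one, one_mul]

theorem no_faithful_extension_of_nonabelian_minimal_normal_general {G : Type} [Group G] [Fintype G]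
    (N : Subgroup G) [N.Normal]
    (χ : FDRep ℂ ↥N) (hχ : CategoryTheory.Simple χ) (hχnt : χ.ρ.ker ≠ ⊤)
    (ψ : FDRep ℂ G) (hψ : CategoryTheory.Simple ψ) (hfaith : ψ.ρ.ker = ⊥)
    -- `ψ` extends `χ`
    (hext : ∀ n : ↥N, ψ.character (n : G) = χ.character n)
    (hcod : codSet G = codSet (G ⧸ N)) :
    False := by
  have hdim : finrank ℂ ψ = finrank ℂ χ := by
    have h1 := hext 1
    rw [Subgroup.coe_one, FDRep.char_one, FDRep.char_one] at h1
    exact_mod_cast h1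
  have hlt : finrank ℂ χ < Nat.card N := FDRep.finrank_lt_card_of_simple χ hχnt
  have hle : codegree ψ ≤ Nat.card (G ⧸ N) := le_natCard_of_mem_codSet (hcod ▸ ⟨ψ, hψ, rfl⟩)
  have := FDRep.nontrivial_of_simple χ
  rw [codegree_of_ker_eq_bot hfaith, hdim, Subgroup.card_eq_card_quotient_mul_card_subgroup N,
    div_le_iff₀ (Nat.cast_pos.mpr finrank_pos), ← Nat.cast_mul] at hle
  exact hlt.not_ge (Nat.le_of_mul_le_mul_left (by exact_mod_cast hle) Nat.card_pos)

theorem no_faithful_extension_of_nonabelian_minimal_normal {G : Type} [Group G] [Fintype G]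
    (N : Subgroup G) [N.Normal] (hbot : N ≠ ⊥)
    (hmin : ∀ M : Subgroup G, M.Normal → M ≤ N → M = ⊥ ∨ M = N)
    (hna : ∃ a b : ↥N, a * b ≠ b * a)
    (χ : FDRep ℂ ↥N) (hχ : CategoryTheory.Simple χ) (hχnt : χ.ρ.ker ≠ ⊤)
    (ψ : FDRep ℂ G) (hψ : CategoryTheory.Simple ψ) (hfaith : ψ.ρ.ker = ⊥)
    -- `ψ` extends `χ`
    (hext : ∀ n : ↥N, ψ.character (n : G) = χ.character n)
    (hcod : codSet G = codSet (G ⧸ N)) :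
    False :=
  no_faithful_extension_of_nonabelian_minimal_normal_general N χ hχ hχnt ψ hψ hfaith hext hcod
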